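/- Define b i j = 1/(i+1) if j ≤ i and b i j = 0 if j > i. Then the map R : ℓ∞ → ℓ∞ given by (R f) i = Σ_{j ≤ i} f j / (i+1) is a well-defined bounded linear operator given by a c₀-matrix, R is falling, and R is not weakly compact. -/

import Mathlib

/-! The matrix `dmat` has nonnegative rows of total mass `1` spread evenly over `j ≤ i`, so the
residue classes modulo `k` split every long row into pieces of mass at most about `1/k`; this is
fallingness. Against weak compactness, the Cesàro means of the indicators of `[0, n]` lie in `c₀`
but agree with `1` on any fixed coordinate once `n` is large. A weak cluster point of them would
lie in `c₀` and have all coordinates `1`, since `c₀` and the coordinate hyperplanes are closed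
and convex, hence weakly closed. -/

open Filter Topology

noncomputable section

/-- The Banach space `ℓ∞` of bounded real sequences with the sup norm. -/
abbrev ellInfty : Type := BoundedContinuousFunction ℕ ℝ

/-- `c₀`, the subspace of `ℓ∞` of sequences converging to `0`. -/
def czero : Submodule ℝ ellInfty where
  carrier := {f | Tendsto (⇑f) atTop (𝓝 (0 : ℝ))}
  add_mem' := by
    intro a b ha hb
    show Tendsto (⇑(a + b)) _ _
    rw [BoundedContinuousFunction.coe_add]
    have h := ha.add hb
    rw [add_zero] at h
    exact h
  zero_mem' := by
    show Tendsto _ _ _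
    simp only [BoundedContinuousFunction.coe_zero]
    exact tendsto_const_nhds
  smul_mem' := by intro c f hf; simpa using hf.const_mul c

/-- A bounded operator between normed spaces is weakly compact if the closure (in the weak
topology) of the image of the closed unit ball is compact in the weak topology. -/
def IsWeaklyCompactOperator {E F : Type*} [SeminormedAddCommGroup E] [NormedSpace ℝ E]
    [SeminormedAddCommGroup F] [NormedSpace ℝ F] (T : E →L[ℝ] F) : Prop :=
  IsCompact (closure (toWeakSpace ℝ F '' (T '' Metric.closedBall 0 1)))

/-- `R : ℓ∞ → ℓ∞` is given by the `c₀`-matrix `b`: the rows of `b` are absolutely summable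
with uniformly bounded `ℓ₁`-norms, the columns of `b` converge to `0`, and `R` acts by
matrix multiplication by `b`. -/
structure IsC0Matrix (R : ellInfty →L[ℝ] ellInfty) (b : ℕ → ℕ → ℝ) : Prop where
  rows_summable : ∀ i, Summable fun j => |b i j|
  rows_bounded : ∃ C : ℝ, ∀ i, (∑' j, |b i j|) ≤ C
  cols_vanish : ∀ j, Tendsto (fun i => b i j) atTop (𝓝 (0 : ℝ))
  matrix_repr : ∀ f : ellInfty, ∀ i, R f i = ∑' j, b i j * f j

/-- The matrix `b` is *falling*: for every `ε > 0` there are a finite partition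
`A₀, …, A_{k-1}` of `ℕ` and `N ∈ ℕ` such that `∑_{j ∈ A m} |b i j| < ε` for all `m < k`
and all `i ≥ N`. -/
def Falling (b : ℕ → ℕ → ℝ) : Prop :=
  ∀ ε : ℝ, 0 < ε → ∃ (k : ℕ) (A : Fin k → Set ℕ) (N : ℕ),
    Pairwise (Function.onFun Disjoint A) ∧ (⋃ m, A m) = Set.univ ∧
    ∀ m : Fin k, ∀ i ≥ N, (∑' j : A m, |b i (j : ℕ)|) < ε

/-- The density matrix `b i j = 1/(i+1)` for `j ≤ i`, `0` otherwise. -/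
def dmat : ℕ → ℕ → ℝ := fun i j => if j ≤ i then 1 / ((i : ℝ) + 1) else 0

open Finset

section MatrixOperator

lemma summable_mul_apply {a : ℕ → ℝ} (ha : Summable fun j => |a j|) (f : ellInfty) :
    Summable fun j => a j * f j :=
  Summable.of_norm_bounded (ha.mul_right ‖f‖) fun j => by
    rw [norm_mul, Real.norm_eq_abs]
    exact mul_le_mul_of_nonneg_left (f.norm_coe_le_norm j) (abs_nonneg _)

lemma abs_tsum_mul_apply_le {a : ℕ → ℝ} (ha : Summable fun j => |a j|) (f : ellInfty) :
    |∑' j, a j * f j| ≤ (∑' j, |a j|) * ‖f‖ := by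
  rw [← tsum_mul_right]
  refine (norm_tsum_le_tsum_norm (summable_mul_apply ha f).norm).trans ?_
  refine Summable.tsum_le_tsum (fun j => ?_) (summable_mul_apply ha f).norm (ha.mul_right _)
  rw [norm_mul, Real.norm_eq_abs]
  exact mul_le_mul_of_nonneg_left (f.norm_coe_le_norm j) (abs_nonneg _)

variable {b : ℕ → ℕ → ℝ} {C : ℝ}

def matrixCLM (b : ℕ → ℕ → ℝ) (hb : ∀ i, Summable fun j => |b i j|)
    (hC : ∀ i, ∑' j, |b i j| ≤ C) : ellInfty →L[ℝ] ellInfty :=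
  have hC₀ : 0 ≤ C := (tsum_nonneg fun j => abs_nonneg (b 0 j)).trans (hC 0)
  have bound (f : ellInfty) (i : ℕ) : ‖∑' j, b i j * f j‖ ≤ C * ‖f‖ :=
    (abs_tsum_mul_apply_le (hb i) f).trans (by gcongr; exact hC i)
  LinearMap.mkContinuous
    { toFun := fun f =>
        BoundedContinuousFunction.ofNormedAddCommGroupDiscrete _ _ (bound f)
      map_add' := fun f g => by
        ext i
        simp only [BoundedContinuousFunction.coe_add, Pi.add_apply, mul_add]
        exact (summable_mul_apply (hb i) f).tsum_add (summable_mul_apply (hb i) g)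
      map_smul' := fun c f => by
        ext i
        simp only [BoundedContinuousFunction.coe_smul, smul_eq_mul,
          RingHom.id_apply, mul_left_comm _ c, tsum_mul_left]
        rfl }
    C fun f => BoundedContinuousFunction.norm_ofNormedAddCommGroup_le _ (by positivity) (bound f)

lemma matrixCLM_apply (hb : ∀ i, Summable fun j => |b i j|) (hC : ∀ i, ∑' j, |b i j| ≤ C)
    (f : ellInfty) (i : ℕ) : matrixCLM b hb hC f i = ∑' j, b i j * f j :=
  rfl

lemma isC0Matrix_matrixCLM (hb : ∀ i, Summable fun j => |b i j|) (hC : ∀ i, ∑' j, |b i j| ≤ C)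
    (hcol : ∀ j, Tendsto (fun i => b i j) atTop (𝓝 0)) : IsC0Matrix (matrixCLM b hb hC) b :=
  ⟨hb, ⟨C, hC⟩, hcol, matrixCLM_apply hb hC⟩

end MatrixOperator

section Cesaro

lemma dmat_nonneg (i j : ℕ) : 0 ≤ dmat i j := by
  unfold dmat
  split_ifs <;> positivity

lemma dmat_of_lt {i j : ℕ} (h : i < j) : dmat i j = 0 := if_neg h.not_ge

lemma tsum_dmat_mul (i : ℕ) (g : ℕ → ℝ) :
    ∑' j, dmat i j * g j = (∑ j ∈ range (i + 1), g j) / ((i : ℝ) + 1) := by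
  rw [tsum_eq_sum (s := range (i + 1)) fun j hj => by
      rw [dmat_of_lt (by simpa [Nat.lt_succ_iff] using hj), zero_mul],
    sum_div]
  refine sum_congr rfl fun j hj => ?_
  rw [dmat, if_pos (Nat.lt_succ_iff.mp (mem_range.mp hj))]
  ring

lemma summable_abs_dmat (i : ℕ) : Summable fun j => |dmat i j| :=
  summable_of_ne_finset_zero (s := range (i + 1)) fun j hj => by
    rw [dmat_of_lt (by simpa [Nat.lt_succ_iff] using hj), abs_zero]

lemma tsum_abs_dmat (i : ℕ) : ∑' j, |dmat i j| = 1 := by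
  have := tsum_dmat_mul i 1
  simp only [Pi.one_apply, mul_one, sum_const, card_range, nsmul_eq_mul] at this
  simp_rw [abs_of_nonneg (dmat_nonneg _ _), this]
  push_cast
  exact div_self (by positivity)

lemma tendsto_dmat_atTop (j : ℕ) : Tendsto (fun i => dmat i j) atTop (𝓝 0) :=
  tendsto_one_div_add_atTop_nhds_zero_nat.congr' <| by
    filter_upwards [eventually_ge_atTop j] with i hi
    rw [dmat, if_pos hi]

lemma tsum_abs_dmat_setOf (p : ℕ → Prop) [DecidablePred p] (i : ℕ) :
    ∑' j : {j | p j}, |dmat i j| = (Nat.count p (i + 1) : ℝ) / ((i : ℝ) + 1) := by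
  have hind : {j | p j}.indicator (fun j => |dmat i j|) =
      fun j => dmat i j * if p j then 1 else 0 := by
    ext j
    by_cases hj : p j <;> simp [hj, abs_of_nonneg (dmat_nonneg i j)]
  rw [_root_.tsum_subtype {j | p j} fun j => |dmat i j|, hind, tsum_dmat_mul, sum_boole,
    Nat.count_eq_card_filter_range]

lemma count_modEq_le (n v : ℕ) {k : ℕ} (hk : 0 < k) :
    (n.count (· ≡ v [MOD k]) : ℝ) ≤ n / k + 1 := by
  rw [Nat.count_modEq_card _ hk]
  push_cast
  gcongr
  · exact Nat.cast_div_le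
  · split_ifs <;> norm_num

lemma falling_dmat : Falling dmat := by
  intro ε hε
  obtain ⟨k, hk⟩ := exists_nat_gt (2 / ε)
  have hk₀ : 0 < k := by exact_mod_cast (div_pos two_pos hε).trans hk
  refine ⟨k, fun m => {j | j ≡ m [MOD k]}, k, fun m m' hne => ?_, ?_, fun m i hi => ?_⟩
  · refine Set.disjoint_left.2 fun j hm hm' => hne (Fin.ext ?_)
    have hmm' : (m : ℕ) % k = m' % k := hm.symm.trans hm'
    rwa [Nat.mod_eq_of_lt m.2, Nat.mod_eq_of_lt m'.2] at hmm'
  · exact Set.eq_univ_of_forall fun j =>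
      Set.mem_iUnion.2 ⟨⟨j % k, Nat.mod_lt j hk₀⟩, (Nat.mod_modEq j k).symm⟩
  · have hki : (k : ℝ) < i + 1 := by exact_mod_cast Nat.lt_succ_of_le hi
    have hk' : (0 : ℝ) < k := by exact_mod_cast hk₀
    rw [tsum_abs_dmat_setOf]
    calc _ ≤ (((i + 1 : ℕ) : ℝ) / k + 1) / (i + 1) := by
          gcongr
          exact count_modEq_le (i + 1) m hk₀
      _ = 1 / k + 1 / (i + 1) := by push_cast; field_simp
      _ < 1 / k + 1 / k := by gcongr
      _ = 2 / k := by ring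
      _ < ε := (div_lt_comm₀ hε hk').1 hk

def cesaro : ellInfty →L[ℝ] ellInfty :=
  matrixCLM dmat summable_abs_dmat fun i => (tsum_abs_dmat i).le

lemma cesaro_apply (f : ellInfty) (i : ℕ) :
    cesaro f i = (∑ j ∈ range (i + 1), f j) / ((i : ℝ) + 1) :=
  tsum_dmat_mul i f

lemma isC0Matrix_cesaro : IsC0Matrix cesaro dmat :=
  isC0Matrix_matrixCLM _ _ tendsto_dmat_atTop

end Cesaro

section WeakCompactness

variable {E F : Type*} [SeminormedAddCommGroup E] [NormedSpace ℝ E]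
  [SeminormedAddCommGroup F] [NormedSpace ℝ F] {ι : Type*} {l : Filter ι}

lemma Convex.isClosed_toWeakSpace_image {C : Set F} (hC : Convex ℝ C) (hCc : IsClosed C) :
    IsClosed (toWeakSpace ℝ F '' C) := by
  rw [← closure_eq_iff_isClosed, ← hC.toWeakSpace_closure ℝ, hCc.closure_eq]

lemma Convex.mem_of_mapClusterPt_toWeakSpace {C : Set F} (hC : Convex ℝ C) (hCc : IsClosed C)
    {u : ι → F} (hu : ∀ᶠ i in l, u i ∈ C) {g : F}
    (hg : MapClusterPt (toWeakSpace ℝ F g) l fun i => toWeakSpace ℝ F (u i)) : g ∈ C :=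
  (toWeakSpace ℝ F).injective.mem_set_image.1 <|
    (hC.isClosed_toWeakSpace_image hCc).mem_of_mapClusterPt hg
      (hu.mono fun _ hi => Set.mem_image_of_mem _ hi)

lemma IsWeaklyCompactOperator.exists_mapClusterPt {T : E →L[ℝ] F}
    (hT : IsWeaklyCompactOperator T) [l.NeBot] {x : ι → E} (hx : ∀ i, ‖x i‖ ≤ 1) :
    ∃ g : F, MapClusterPt (toWeakSpace ℝ F g) l fun i => toWeakSpace ℝ F (T (x i)) := by
  obtain ⟨g, -, hg⟩ := hT.exists_mapClusterPt_of_frequently (l := l) <|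
    Frequently.of_forall fun i => subset_closure <| Set.mem_image_of_mem _ <|
      Set.mem_image_of_mem _ <| mem_closedBall_zero_iff.2 (hx i)
  exact ⟨(toWeakSpace ℝ F).symm g, by simpa using hg⟩

end WeakCompactness

lemma isClosed_czero : IsClosed (czero : Set ellInfty) :=
  isClosed_of_closure_subset fun f hf => by
    obtain ⟨u, hu, hlim⟩ := mem_closure_iff_seq_limit.1 hf
    exact (BoundedContinuousFunction.tendsto_iff_tendstoUniformly.1 hlim)
      |>.tendsto_of_eventually_tendsto (Eventually.of_forall hu) tendsto_const_nhds

lemma one_notMem_czero : (1 : ellInfty) ∉ czero := fun h =>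
  one_ne_zero (tendsto_nhds_unique tendsto_const_nhds (h : Tendsto (fun _ : ℕ => (1 : ℝ)) _ _))

lemma not_isWeaklyCompactOperator_of_eventually_eq {T : ellInfty →L[ℝ] ellInfty}
    {x : ℕ → ellInfty} {h : ellInfty} (hx : ∀ n, ‖x n‖ ≤ 1) (hTx : ∀ n, T (x n) ∈ czero)
    (hlim : ∀ i, ∀ᶠ n in atTop, T (x n) i = h i) (hh : h ∉ czero) :
    ¬ IsWeaklyCompactOperator T := by
  intro hT
  obtain ⟨g, hg⟩ := hT.exists_mapClusterPt (l := atTop) hx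
  have hgh : g = h := by
    ext i
    exact (convex_hyperplane (BoundedContinuousFunction.evalCLM ℝ i).toLinearMap.isLinear
      (h i)).mem_of_mapClusterPt_toWeakSpace
      (isClosed_eq (BoundedContinuousFunction.evalCLM ℝ i).continuous continuous_const)
      (hlim i) hg
  exact hh (hgh ▸ czero.convex.mem_of_mapClusterPt_toWeakSpace isClosed_czero
    (Eventually.of_forall hTx) hg)

def indicatorIic (n : ℕ) : ellInfty :=
  BoundedContinuousFunction.ofNormedAddCommGroupDiscrete (fun j => if j ≤ n then 1 else 0) 1
    fun j => by split_ifs <;> simp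

lemma norm_indicatorIic_le (n : ℕ) : ‖indicatorIic n‖ ≤ 1 :=
  BoundedContinuousFunction.norm_ofNormedAddCommGroup_le _ zero_le_one fun j => by
    split_ifs <;> simp

lemma cesaro_indicatorIic (n i : ℕ) :
    cesaro (indicatorIic n) i = ((min n i : ℕ) + 1 : ℝ) / ((i : ℝ) + 1) := by
  have hfilter : {j ∈ range (i + 1) | j ≤ n} = range (min n i + 1) := by
    ext j
    simp only [mem_filter, mem_range]
    omega
  rw [cesaro_apply]
  change (∑ j ∈ range (i + 1), if j ≤ n then (1 : ℝ) else 0) / _ = _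
  rw [sum_boole, hfilter, card_range]
  push_cast
  rfl

lemma cesaro_indicatorIic_mem_czero (n : ℕ) : cesaro (indicatorIic n) ∈ czero := by
  have h := tendsto_one_div_add_atTop_nhds_zero_nat.const_mul ((n : ℝ) + 1)
  rw [mul_zero] at h
  refine h.congr' ?_
  filter_upwards [eventually_ge_atTop n] with i hi
  rw [cesaro_indicatorIic, min_eq_left hi, mul_one_div]

lemma not_isWeaklyCompactOperator_cesaro : ¬ IsWeaklyCompactOperator cesaro := by
  refine not_isWeaklyCompactOperator_of_eventually_eq norm_indicatorIic_le
    cesaro_indicatorIic_mem_czero (fun i => ?_) one_notMem_czero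
  filter_upwards [eventually_ge_atTop i] with n hn
  rw [cesaro_indicatorIic, min_eq_right hn, BoundedContinuousFunction.coe_one, Pi.one_apply]
  exact div_self (by positivity)

/-- The map `f ↦ (i ↦ (∑_{j ≤ i} f j)/(i+1))` is a well-defined bounded operator on `ℓ∞`
given by the `c₀`-matrix `dmat`, it is falling, and it is not weakly compact. -/
theorem statement2 :
    ∃ R : ellInfty →L[ℝ] ellInfty,
      (∀ f : ellInfty, ∀ i : ℕ,
        R f i = (∑ j ∈ Finset.range (i + 1), f j) / ((i : ℝ) + 1)) ∧
      IsC0Matrix R dmat ∧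
      Falling dmat ∧
      ¬ IsWeaklyCompactOperator R :=
  ⟨cesaro, cesaro_apply, isC0Matrix_cesaro, falling_dmat, not_isWeaklyCompactOperator_cesaro⟩
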